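/- arXiv:1811.00594 — 3 statements merged into one kernel-verified Lean document; each statement's English description precedes it below -/
import Mathlib

section
/- Let θ be a primitive substitution of constant length λ ≥ 2 over a finite alphabet A with θ(a₀)_0 = a₀ for some a₀ ∈ A, and suppose c(θ) = h(θ). Then for every continuous f : X_θ → ℂ, every x ∈ X_θ and every bounded function u : ℕ → ℂ that is aperiodic (no multiplicativity assumed), lim_{N→∞} (1/N) Σ_{1 ≤ n ≤ N} f(S^n x)·u(n) = 0. -/
open Filter Topology

/-- `substIter θ l k a j` is the `j`-th letter of `θ^k(a)`, where `θ : A → A^l` is a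
substitution of constant length `l` (the letters of `θ(a)` being `θ a 0, …, θ a (l-1)`).
It is meaningful for `j < l ^ k` and satisfies
`θ^{k+1}(a)_{j'·l + r} = θ(θ^k(a)_{j'})_r`. -/
def substIter {A : Type*} (θ : A → ℕ → A) (l : ℕ) : ℕ → A → ℕ → A
  | 0, a, _ => a
  | k + 1, a, j => θ (substIter θ l k a (j / l)) (j % l)

/-- A substitution of constant length `l` is primitive if some iterate of every letter
contains every letter. -/
def SubstPrimitive {A : Type*} (θ : A → ℕ → A) (l : ℕ) : Prop :=
  ∃ k, 1 ≤ k ∧ ∀ a b : A, ∃ j, j < l ^ k ∧ substIter θ l k a j = b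

/-- Primitivity of a substitution restricted to a sub-alphabet `S`. -/
def SubstPrimitiveOn {A : Type*} (θ : A → ℕ → A) (l : ℕ) (S : Set A) : Prop :=
  ∃ k, 1 ≤ k ∧ ∀ a ∈ S, ∀ b ∈ S, ∃ j, j < l ^ k ∧ substIter θ l k a j = b

/-- The column number of a substitution of constant length `l`, restricted to the
sub-alphabet `S`: the minimal cardinality of a column set `{θ^k(a)_j : a ∈ S}`. -/
noncomputable def columnNumberOn {A : Type*} (θ : A → ℕ → A) (l : ℕ) (S : Set A) : ℕ :=
  sInf { n : ℕ | ∃ k, 1 ≤ k ∧ ∃ j, j < l ^ k ∧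
    ((fun a => substIter θ l k a j) '' S).ncard = n }

/-- The column number `c(θ)` of a substitution of constant length `l`. -/
noncomputable def columnNumber {A : Type*} (θ : A → ℕ → A) (l : ℕ) : ℕ :=
  columnNumberOn θ l Set.univ

/-- The one-sided fixed point `u` of `θ` obtained by iterating `θ` at a letter `a₀`
with `θ(a₀)_0 = a₀`: `u n = θ^k(a₀)_n` for any `k` with `n < l^k`. -/
def substFixedPoint {A : Type*} (θ : A → ℕ → A) (l : ℕ) (a₀ : A) : ℕ → A :=
  fun n => substIter θ l (n + 1) a₀ n

/-- The height `h(θ)`: the largest `m ≥ 1` coprime to `l` dividing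
`gcd {r ≥ 1 : u[r] = u[0]}`, i.e. dividing every return time of `u[0]`. -/
noncomputable def substHeight {A : Type*} (θ : A → ℕ → A) (l : ℕ) (a₀ : A) : ℕ :=
  sSup { m : ℕ | 1 ≤ m ∧ Nat.Coprime m l ∧
    ∀ r : ℕ, 1 ≤ r → substFixedPoint θ l a₀ r = substFixedPoint θ l a₀ 0 → m ∣ r }

/-- The subshift `X_θ ⊆ A^ℤ`: all `x` each of whose finite blocks occurs in some
`θ^k(a)`. -/
def subshift {A : Type*} (θ : A → ℕ → A) (l : ℕ) : Set (ℤ → A) :=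
  { x | ∀ (i : ℤ) (n : ℕ), ∃ k, 1 ≤ k ∧ ∃ a : A, ∃ j : ℕ, j + n ≤ l ^ k ∧
      ∀ m : ℕ, m < n → x (i + (m : ℤ)) = substIter θ l k a (j + m) }

/-- The subshift `X_x ⊆ A^ℤ` generated by a one-sided sequence `x ∈ A^ℕ`: all `z`
each of whose finite blocks occurs in `x`. -/
def subshiftOf {A : Type*} (x : ℕ → A) : Set (ℤ → A) :=
  { z | ∀ (i : ℤ) (n : ℕ), ∃ j : ℕ, ∀ m : ℕ, m < n → z (i + (m : ℤ)) = x (j + m) }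

/-- The left shift on `A^ℤ`. -/
def shift {A : Type*} (x : ℤ → A) : ℤ → A := fun n => x (n + 1)

/-- A bounded arithmetic function. -/
def BoundedSeq (u : ℕ → ℂ) : Prop := ∃ C : ℝ, ∀ n, ‖u n‖ ≤ C

/-- A multiplicative arithmetic function: `u(mn) = u(m)u(n)` for coprime `m, n`. -/
def MultiplicativeSeq (u : ℕ → ℂ) : Prop :=
  ∀ m n : ℕ, Nat.Coprime m n → u (m * n) = u m * u n

/-- An aperiodic arithmetic function: zero mean along every arithmetic progression. -/
def AperiodicSeq (u : ℕ → ℂ) : Prop :=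
  ∀ a b : ℕ, 1 ≤ a →
    Tendsto (fun N : ℕ => (N : ℂ)⁻¹ * ∑ n ∈ Finset.Icc 1 N, u (a * n + b)) atTop (nhds 0)

/-- The Weyl pseudo-metric
`d_W(x,y) = limsup_N sup_{ℓ ≥ 1} (1/N)·#{ℓ ≤ n < ℓ+N : x n ≠ y n}`. -/
noncomputable def weylDist {B : Type*} (x y : ℕ → B) : ℝ :=
  limsup (fun N : ℕ =>
    ⨆ ℓ : ℕ, ⨆ _ : 1 ≤ ℓ,
      (({ n : ℕ | ℓ ≤ n ∧ n < ℓ + N ∧ x n ≠ y n }.ncard : ℝ) / N)) atTop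

/-- A periodic sequence. -/
def IsPeriodicSeq {B : Type*} (v : ℕ → B) : Prop :=
  ∃ p, 1 ≤ p ∧ ∀ n, v (n + p) = v n

/-- Weyl rational almost periodicity: a `d_W`-limit of periodic sequences. -/
def WRAPSeq {B : Type*} (x : ℕ → B) : Prop :=
  ∀ ε : ℝ, 0 < ε → ∃ v : ℕ → B, IsPeriodicSeq v ∧ weylDist x v < ε

/-- The family `𝒳(θ)` of column sets realizing the column number of `θ`. -/
noncomputable def columnSets {A : Type*} (θ : A → ℕ → A) (l : ℕ) : Set (Set A) :=
  { M | (∃ k, 1 ≤ k ∧ ∃ j, j < l ^ k ∧ M = (fun a => substIter θ l k a j) '' Set.univ) ∧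
        M.ncard = columnNumber θ l }

/-- The synchronizing part `~θ` of `θ`, as a substitution on subsets of the alphabet:
`~θ(M)_j = {θ(a)_j : a ∈ M}`. -/
def synchPart {A : Type*} (θ : A → ℕ → A) : Set A → ℕ → Set A :=
  fun M j => (fun a => θ a j) '' M

/-- The joining `θ ∨ ζ` of two substitutions of the same constant length. -/
def joinSub {A B : Type*} (θ : A → ℕ → A) (ζ : B → ℕ → B) : A × B → ℕ → A × B :=
  fun p j => (θ p.1 j, ζ p.2 j)

/-- The pure base `θ^{(h)}` of `θ`: a substitution of length `l` on blocks of length `h`,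
`θ^{(h)}(w)_j = θ(w)[jh, (j+1)h−1]`, where `θ(w)` is the concatenation
`θ(w_0)…θ(w_{h-1})`. -/
def pureBase {A : Type*} (θ : A → ℕ → A) (l h : ℕ) : (Fin h → A) → ℕ → (Fin h → A) :=
  fun w j i => θ (w ⟨(j * h + i.val) / l % h, Nat.mod_lt _ i.pos⟩) ((j * h + i.val) % l)

/-- Iterated cocycle `σ^{(k)}`, with `σ^{(1)} = σ` and
`σ^{(k+1)}(M, j₁·l + j₂) = σ^{(k)}(M, j₁) ∘ σ(~θ^k(M)_{j₁}, j₂)`. -/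
def sigmaIter {X : Type*} {c : ℕ} (tilde : X → ℕ → X)
    (σ : X → ℕ → Equiv.Perm (Fin c)) (l : ℕ) : ℕ → X → ℕ → Equiv.Perm (Fin c)
  | 0, _, _ => 1
  | k + 1, M, j =>
      sigmaIter tilde σ l k M (j / l) * σ (substIter tilde l k M (j / l)) (j % l)

/-- The group extension substitution `Θ̂(g, M)_j = (g ∘ σ(M,j), ~θ(M)_j)`. -/
def hatTheta {X : Type*} {c : ℕ} (tilde : X → ℕ → X)
    (σ : X → ℕ → Equiv.Perm (Fin c)) : Equiv.Perm (Fin c) × X → ℕ → Equiv.Perm (Fin c) × X :=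
  fun p j => (p.1 * σ p.2 j, tilde p.2 j)

/-- The group `G` generated by the cocycle values `σ(M, j)`, `M ∈ 𝒳`, `j < l`. -/
def cocycleGroup {X : Type*} {c : ℕ} (σ : X → ℕ → Equiv.Perm (Fin c)) (l : ℕ) :
    Subgroup (Equiv.Perm (Fin c)) :=
  Subgroup.closure { g | ∃ M : X, ∃ j, j < l ∧ g = σ M j }

/-!
Let `h` be the height. Positions of the fixed point carrying the same letter are congruent
modulo `h`, so every letter `a` has a residue `π a : ZMod h`, and `π (θ^k(a)_j) = π a · l^k + j`.
Hence `π` maps a column of minimal size `c(θ) = h` bijectively onto `ZMod h`: that column of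
`θ^k` depends only on `π a`. Iterating, all but `(l^k - 1)^m` of the `l^(mk)` columns of
`θ^(mk)` depend only on `π`, and at the positions read through these columns every point of
`X_θ` is periodic with period `h · l^(mk)`. As `f` is uniformly close to a function of a finite
window, `n ↦ f (S^n x)` is approximated in Besicovitch mean by periodic sequences, and periodic
sequences are orthogonal to aperiodic ones.
-/

section Substitution

variable {A : Type*} {θ : A → ℕ → A} {l : ℕ} {a₀ : A}

theorem substIter_add (k₁ k₂ : ℕ) (a : A) (j : ℕ) :
    substIter θ l (k₁ + k₂) a j
      = substIter θ l k₂ (substIter θ l k₁ a (j / l ^ k₂)) (j % l ^ k₂) := by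
  induction k₂ generalizing j with
  | zero => simp [substIter]
  | succ k ih =>
    rw [← add_assoc, substIter, substIter, ih, Nat.div_div_eq_div_mul, ← pow_succ',
      pow_succ', Nat.mod_mul_right_div_self, Nat.mod_mul_right_mod]

theorem substIter_of_le (hl : 0 < l) (ha₀ : θ a₀ 0 = a₀) {k K j : ℕ} (hkK : k ≤ K)
    (hj : j < l ^ k) : substIter θ l K a₀ j = substIter θ l k a₀ j := by
  induction K, hkK using Nat.le_induction with
  | base => rfl
  | succ K hkK ih =>
    have hjK : j < l ^ K := hj.trans_le (Nat.pow_le_pow_right hl hkK)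
    rw [add_comm, substIter_add, Nat.div_eq_of_lt hjK, Nat.mod_eq_of_lt hjK, ← ih]
    simp [substIter, ha₀]

theorem substFixedPoint_eq_substIter (hl : 1 < l) (ha₀ : θ a₀ 0 = a₀) {k n : ℕ}
    (hn : n < l ^ k) : substFixedPoint θ l a₀ n = substIter θ l k a₀ n := by
  have hn' : n < l ^ (n + 1) := (Nat.lt_pow_self hl).trans_le
    (Nat.pow_le_pow_right (by omega) n.le_succ)
  rcases le_total k (n + 1) with h | h
  · exact substIter_of_le (by omega) ha₀ h hn
  · exact (substIter_of_le (by omega) ha₀ h hn').symm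

theorem substFixedPoint_zero (hl : 1 < l) (ha₀ : θ a₀ 0 = a₀) :
    substFixedPoint θ l a₀ 0 = a₀ :=
  substFixedPoint_eq_substIter (k := 0) hl ha₀ one_pos

theorem substFixedPoint_mul_pow_add (hl : 1 < l) (ha₀ : θ a₀ 0 = a₀) (n k : ℕ) {j : ℕ}
    (hj : j < l ^ k) :
    substFixedPoint θ l a₀ (n * l ^ k + j) = substIter θ l k (substFixedPoint θ l a₀ n) j := by
  have hn : n < l ^ (n + 1) := (Nat.lt_pow_self hl).trans_le
    (Nat.pow_le_pow_right (by omega) n.le_succ)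
  have hnj : n * l ^ k + j < l ^ (n + 1 + k) := by
    rw [pow_add]
    nlinarith
  have hq : (n * l ^ k + j) / l ^ k = n := by
    rw [add_comm, Nat.add_mul_div_right _ _ (by positivity), Nat.div_eq_of_lt hj, zero_add]
  have hr : (n * l ^ k + j) % l ^ k = j := by
    rw [add_comm, Nat.add_mul_mod_self_right, Nat.mod_eq_of_lt hj]
  rw [substFixedPoint_eq_substIter hl ha₀ hnj, substIter_add, hq, hr]
  rfl

theorem exists_substFixedPoint_eq (hl : 1 < l) (hθ : SubstPrimitive θ l) (ha₀ : θ a₀ 0 = a₀)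
    (b : A) : ∃ n, substFixedPoint θ l a₀ n = b := by
  obtain ⟨k, -, hprim⟩ := hθ
  obtain ⟨j, hj, rfl⟩ := hprim a₀ b
  exact ⟨j, substFixedPoint_eq_substIter hl ha₀ hj⟩

end Substitution

section Height

variable {A : Type*} {θ : A → ℕ → A} {l : ℕ} {a₀ : A}

theorem substHeight_mem (hl : 1 < l) (hθ : SubstPrimitive θ l) (ha₀ : θ a₀ 0 = a₀) :
    substHeight θ l a₀ ∈ { m : ℕ | 1 ≤ m ∧ Nat.Coprime m l ∧
      ∀ r : ℕ, 1 ≤ r → substFixedPoint θ l a₀ r = substFixedPoint θ l a₀ 0 → m ∣ r } := by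
  obtain ⟨k, -, hprim⟩ := hθ
  obtain ⟨j, hj, hja₀⟩ := hprim (substFixedPoint θ l a₀ 1) a₀
  have hret : substFixedPoint θ l a₀ (1 * l ^ k + j) = substFixedPoint θ l a₀ 0 := by
    rw [substFixedPoint_mul_pow_add hl ha₀ 1 k hj, hja₀, substFixedPoint_zero hl ha₀]
  have hpos : 1 ≤ 1 * l ^ k + j := by have := Nat.one_le_pow k l (by omega); omega
  exact Nat.sSup_mem ⟨1, le_rfl, Nat.coprime_one_left l, fun r _ _ => one_dvd r⟩
    ⟨_, fun m hm => Nat.le_of_dvd hpos (hm.2.2 _ hpos hret)⟩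

theorem substHeight_dvd (hl : 1 < l) (hθ : SubstPrimitive θ l) (ha₀ : θ a₀ 0 = a₀) {r : ℕ}
    (hr : substFixedPoint θ l a₀ r = a₀) : substHeight θ l a₀ ∣ r := by
  rcases Nat.eq_zero_or_pos r with rfl | h
  · exact dvd_zero _
  · exact (substHeight_mem hl hθ ha₀).2.2 r h (by rw [hr, substFixedPoint_zero hl ha₀])

theorem isUnit_natCast_pow_substHeight (hl : 1 < l) (hθ : SubstPrimitive θ l)
    (ha₀ : θ a₀ 0 = a₀) (k : ℕ) : IsUnit ((l : ZMod (substHeight θ l a₀)) ^ k) :=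
  ((ZMod.isUnit_iff_coprime _ _).mpr (substHeight_mem hl hθ ha₀).2.1.symm).pow k

theorem natCast_eq_of_substFixedPoint_eq (hl : 1 < l) (hθ : SubstPrimitive θ l)
    (ha₀ : θ a₀ 0 = a₀) {n m : ℕ} (hnm : substFixedPoint θ l a₀ n = substFixedPoint θ l a₀ m) :
    (n : ZMod (substHeight θ l a₀)) = m := by
  obtain ⟨k, hk, hprim⟩ := id hθ
  obtain ⟨p, hp, hpa₀⟩ := hprim (substFixedPoint θ l a₀ n) a₀
  have hzero : ∀ {i}, substFixedPoint θ l a₀ i = substFixedPoint θ l a₀ n →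
      ((i * l ^ k + p : ℕ) : ZMod (substHeight θ l a₀)) = 0 := fun hi =>
    (ZMod.natCast_eq_zero_iff _ _).mpr <| substHeight_dvd hl hθ ha₀ <| by
      rw [substFixedPoint_mul_pow_add hl ha₀ _ _ hp, hi, hpa₀]
  have h := (hzero rfl).trans (hzero hnm.symm).symm
  push_cast at h
  exact (isUnit_natCast_pow_substHeight hl hθ ha₀ k).mul_left_inj.mp (add_right_cancel h)

/-- `π a`: the common residue modulo the height of all positions of `a` in the fixed point. -/
noncomputable def heightResidue (θ : A → ℕ → A) (l : ℕ) (a₀ a : A) : ZMod (substHeight θ l a₀) :=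
  (Classical.epsilon fun n => substFixedPoint θ l a₀ n = a : ℕ)

theorem heightResidue_substFixedPoint (hl : 1 < l) (hθ : SubstPrimitive θ l)
    (ha₀ : θ a₀ 0 = a₀) (n : ℕ) :
    heightResidue θ l a₀ (substFixedPoint θ l a₀ n) = n :=
  natCast_eq_of_substFixedPoint_eq hl hθ ha₀
    (Classical.epsilon_spec (p := fun m => substFixedPoint θ l a₀ m = substFixedPoint θ l a₀ n)
      ⟨n, rfl⟩)

theorem heightResidue_substIter (hl : 1 < l) (hθ : SubstPrimitive θ l) (ha₀ : θ a₀ 0 = a₀)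
    (a : A) {k j : ℕ} (hj : j < l ^ k) :
    heightResidue θ l a₀ (substIter θ l k a j) = heightResidue θ l a₀ a * l ^ k + j := by
  obtain ⟨n, rfl⟩ := exists_substFixedPoint_eq hl hθ ha₀ a
  rw [← substFixedPoint_mul_pow_add hl ha₀ n k hj, heightResidue_substFixedPoint hl hθ ha₀,
    heightResidue_substFixedPoint hl hθ ha₀]
  push_cast
  rfl

end Height

section DeterminedColumns

variable {A H : Type*} {θ : A → ℕ → A} {l : ℕ} {π : A → H}

def ColumnDeterminedBy (θ : A → ℕ → A) (l : ℕ) (π : A → H) (k r : ℕ) : Prop :=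
  ∀ a b, π a = π b → substIter θ l k a r = substIter θ l k b r

open Classical in
noncomputable def undeterminedColumns (θ : A → ℕ → A) (l : ℕ) (π : A → H) (K : ℕ) :
    Finset ℕ :=
  {r ∈ Finset.range (l ^ K) | ¬ ColumnDeterminedBy θ l π K r}

def SubstCompatible (θ : A → ℕ → A) (l : ℕ) (π : A → H) : Prop :=
  ∀ K q, q < l ^ K → ∀ a b, π a = π b → π (substIter θ l K a q) = π (substIter θ l K b q)

theorem SubstCompatible.columnDeterminedBy_add (hπ : SubstCompatible θ l π) {K k r : ℕ}
    (hr : r / l ^ k < l ^ K)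
    (h : ColumnDeterminedBy θ l π K (r / l ^ k) ∨ ColumnDeterminedBy θ l π k (r % l ^ k)) :
    ColumnDeterminedBy θ l π (K + k) r := by
  intro a b hab
  rw [substIter_add, substIter_add]
  rcases h with h | h
  · rw [h a b hab]
  · exact h _ _ (hπ K _ hr a b hab)

theorem SubstCompatible.card_undeterminedColumns_mul_le (hπ : SubstCompatible θ l π)
    (hl : 0 < l) {k j : ℕ} (hj : j < l ^ k) (hkj : ColumnDeterminedBy θ l π k j) (m : ℕ) :
    (undeterminedColumns θ l π (m * k)).card ≤ (l ^ k - 1) ^ m := by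
  classical
  induction m with
  | zero => exact (Finset.card_filter_le _ _).trans (by simp)
  | succ m ih =>
    calc (undeterminedColumns θ l π ((m + 1) * k)).card
        ≤ (undeterminedColumns θ l π (m * k) ×ˢ (Finset.range (l ^ k)).erase j).card := by
          refine Finset.card_le_card_of_injOn (fun r => (r / l ^ k, r % l ^ k)) ?_ ?_
          · intro r hr
            simp only [undeterminedColumns, Finset.coe_filter, Finset.mem_range,
              Set.mem_ofPred_eq, Nat.succ_mul, pow_add] at hr
            have hq : r / l ^ k < l ^ (m * k) :=
              Nat.div_lt_of_lt_mul (by rw [mul_comm]; exact hr.1)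
            simp only [undeterminedColumns, Finset.coe_product, Set.mem_prod, Finset.mem_coe,
              Finset.mem_filter, Finset.mem_range, Finset.mem_erase]
            refine ⟨⟨hq, fun h => hr.2 ?_⟩, fun h => hr.2 ?_, Nat.mod_lt _ (pow_pos hl k)⟩
            · exact hπ.columnDeterminedBy_add hq (.inl h)
            · exact hπ.columnDeterminedBy_add hq (.inr (h ▸ hkj))
          · intro r _ r' _ h
            simp only [Prod.mk.injEq] at h
            rw [← Nat.div_add_mod r (l ^ k), ← Nat.div_add_mod r' (l ^ k), h.1, h.2]
      _ ≤ (l ^ k - 1) ^ (m + 1) := by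
          rw [Finset.card_product, Finset.card_erase_of_mem (Finset.mem_range.mpr hj),
            Finset.card_range, pow_succ]
          exact Nat.mul_le_mul_right _ ih

theorem SubstCompatible.exists_card_undeterminedColumns_le (hπ : SubstCompatible θ l π)
    (hl : 0 < l) {k j : ℕ} (hj : j < l ^ k) (hkj : ColumnDeterminedBy θ l π k j) {δ : ℝ}
    (hδ : 0 < δ) : ∃ K, ((undeterminedColumns θ l π K).card : ℝ) ≤ δ * l ^ K := by
  have hpos : (0 : ℝ) < l ^ k := by positivity
  set ρ : ℝ := ((l ^ k - 1 : ℕ) : ℝ) / l ^ k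
  have hρ : ρ < 1 := by
    rw [div_lt_one hpos, Nat.cast_sub (Nat.one_le_pow _ _ hl)]
    push_cast
    linarith
  obtain ⟨m, hm⟩ := ((tendsto_pow_atTop_nhds_zero_of_lt_one (by positivity) hρ).eventually
    (gt_mem_nhds hδ)).exists
  refine ⟨m * k, ?_⟩
  calc ((undeterminedColumns θ l π (m * k)).card : ℝ)
      ≤ ((l ^ k - 1 : ℕ) : ℝ) ^ m := by
        exact_mod_cast hπ.card_undeterminedColumns_mul_le hl hj hkj m
    _ = ρ ^ m * l ^ (m * k) := by
        rw [div_pow, mul_comm m k, pow_mul, div_mul_cancel₀ _ (by positivity)]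
    _ ≤ δ * l ^ (m * k) := by gcongr

end DeterminedColumns

section HeightColumns

variable {A : Type*} {θ : A → ℕ → A} {l : ℕ} {a₀ : A}

theorem substCompatible_heightResidue (hl : 1 < l) (hθ : SubstPrimitive θ l)
    (ha₀ : θ a₀ 0 = a₀) : SubstCompatible θ l (heightResidue θ l a₀) := by
  intro K q hq a b hab
  rw [heightResidue_substIter hl hθ ha₀ a hq, heightResidue_substIter hl hθ ha₀ b hq, hab]

theorem exists_columnDeterminedBy_heightResidue [Finite A] (hl : 1 < l)
    (hθ : SubstPrimitive θ l) (ha₀ : θ a₀ 0 = a₀)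
    (hch : columnNumber θ l = substHeight θ l a₀) :
    ∃ k j, j < l ^ k ∧ ColumnDeterminedBy θ l (heightResidue θ l a₀) k j := by
  have : NeZero (substHeight θ l a₀) := ⟨by have := (substHeight_mem hl hθ ha₀).1; omega⟩
  obtain ⟨k, -, j, hj, hcard⟩ : columnNumber θ l ∈ { n : ℕ | ∃ k, 1 ≤ k ∧ ∃ j, j < l ^ k ∧
      ((fun a => substIter θ l k a j) '' Set.univ).ncard = n } :=
    Nat.sInf_mem ⟨_, 1, le_rfl, 0, by simp; omega, rfl⟩
  set column := (fun a => substIter θ l k a j) '' Set.univ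
  have hcol : ∀ a, heightResidue θ l a₀ (substIter θ l k a j)
      = heightResidue θ l a₀ a * l ^ k + j := fun a => heightResidue_substIter hl hθ ha₀ a hj
  -- `π` maps the column onto `ZMod h`, a set with `c(θ) = h` elements, hence is injective on it
  have hsurj : heightResidue θ l a₀ '' column = Set.univ := by
    refine Set.eq_univ_of_forall fun c => ?_
    obtain ⟨n, hn⟩ := ZMod.natCast_zmod_surjective
      ((c - (j : ZMod (substHeight θ l a₀))) * ((l : ZMod (substHeight θ l a₀)) ^ k)⁻¹)
    refine ⟨_, ⟨substFixedPoint θ l a₀ n, trivial, rfl⟩, ?_⟩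
    rw [hcol, heightResidue_substFixedPoint hl hθ ha₀, hn, mul_assoc,
      ZMod.inv_mul_of_unit _ (isUnit_natCast_pow_substHeight hl hθ ha₀ k), mul_one,
      sub_add_cancel]
  have hinj : Set.InjOn (heightResidue θ l a₀) column := Set.injOn_of_ncard_image_eq
    (by rw [hsurj, hcard, hch, Set.ncard_univ, Nat.card_zmod]) (Set.toFinite _)
  refine ⟨k, j, hj, fun a b hab => hinj ⟨a, trivial, rfl⟩ ⟨b, trivial, rfl⟩ ?_⟩
  simp only [hcol, hab]

theorem exists_card_undeterminedColumns_heightResidue_le [Finite A] (hl : 1 < l)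
    (hθ : SubstPrimitive θ l) (ha₀ : θ a₀ 0 = a₀)
    (hch : columnNumber θ l = substHeight θ l a₀) {δ : ℝ} (hδ : 0 < δ) :
    ∃ K, ((undeterminedColumns θ l (heightResidue θ l a₀) K).card : ℝ) ≤ δ * l ^ K := by
  obtain ⟨k, j, hj, hkj⟩ := exists_columnDeterminedBy_heightResidue hl hθ ha₀ hch
  exact (substCompatible_heightResidue hl hθ ha₀).exists_card_undeterminedColumns_le
    (by omega) hj hkj hδ

theorem substFixedPoint_eq_of_modEq (hl : 1 < l) (hθ : SubstPrimitive θ l) (ha₀ : θ a₀ 0 = a₀)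
    {K ν ν' : ℕ} (h : ν ≡ ν' [MOD substHeight θ l a₀ * l ^ K])
    (hdet : ColumnDeterminedBy θ l (heightResidue θ l a₀) K (ν % l ^ K)) :
    substFixedPoint θ l a₀ ν = substFixedPoint θ l a₀ ν' := by
  have hpos : 0 < l ^ K := by positivity
  have hr : ν % l ^ K = ν' % l ^ K := h.of_mul_left _
  have hq : (ν / l ^ K : ZMod (substHeight θ l a₀)) = (ν' / l ^ K : ℕ) := by
    rw [ZMod.natCast_eq_natCast_iff', ← Nat.mod_mul_right_div_self, ← Nat.mod_mul_right_div_self,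
      mul_comm, h]
  rw [← Nat.div_add_mod' ν (l ^ K), ← Nat.div_add_mod' ν' (l ^ K),
    substFixedPoint_mul_pow_add hl ha₀ _ _ (Nat.mod_lt _ hpos),
    substFixedPoint_mul_pow_add hl ha₀ _ _ (Nat.mod_lt _ hpos), ← hr]
  apply hdet
  rwa [heightResidue_substFixedPoint hl hθ ha₀, heightResidue_substFixedPoint hl hθ ha₀]

end HeightColumns

section Subshift

variable {A : Type*} {θ : A → ℕ → A} {l : ℕ} {a₀ : A}

theorem exists_eq_substFixedPoint_of_mem_subshift (hl : 1 < l) (hθ : SubstPrimitive θ l)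
    (ha₀ : θ a₀ 0 = a₀) {x : ℤ → A} (hx : x ∈ subshift θ l) (n : ℕ) :
    ∃ c : ℕ, n ≤ c ∧ ∀ i : ℤ, i.natAbs ≤ n → x i = substFixedPoint θ l a₀ (c + i).toNat := by
  obtain ⟨k, -, a, j, hjn, hblock⟩ := hx (-n) (2 * n + 1)
  obtain ⟨p, rfl⟩ := exists_substFixedPoint_eq hl hθ ha₀ a
  refine ⟨p * l ^ k + j + n, by omega, fun i hi => ?_⟩
  have hidx : ((p * l ^ k + j + n : ℕ) + i).toNat = p * l ^ k + (j + (i + n).toNat) := by omega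
  rw [hidx, substFixedPoint_mul_pow_add hl ha₀ _ _ (by omega), ← hblock _ (by omega)]
  congr 1
  omega

theorem exists_eq_of_modEq_of_columnDeterminedBy (hl : 1 < l) (hθ : SubstPrimitive θ l)
    (ha₀ : θ a₀ 0 = a₀) {x : ℤ → A} (hx : x ∈ subshift θ l) (K : ℕ) :
    ∃ T : ℤ, ∀ i i' : ℤ, i ≡ i' [ZMOD (substHeight θ l a₀ * l ^ K : ℕ)] →
      ColumnDeterminedBy θ l (heightResidue θ l a₀) K ((T + i) % (l ^ K : ℕ)).toNat →
      x i = x i' := by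
  set P := substHeight θ l a₀ * l ^ K
  have : NeZero P := ⟨by have := (substHeight_mem hl hθ ha₀).1; positivity⟩
  choose c hcn hcx using exists_eq_substFixedPoint_of_mem_subshift hl hθ ha₀ hx
  -- a residue class modulo `P` containing infinitely many of the window offsets `c n`
  obtain ⟨t, ht⟩ := Finite.exists_infinite_fiber fun n => (c n : ZMod P)
  refine ⟨t.val, fun i i' hii' hdet => ?_⟩
  obtain ⟨n, hnt, hn⟩ := (Set.infinite_coe_iff.mp ht).exists_gt (max i.natAbs i'.natAbs)
  have hcT : (c n : ℤ) ≡ t.val [ZMOD P] := by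
    rw [← ZMod.intCast_eq_intCast_iff]
    simpa using hnt
  have := hcn n
  rw [hcx n i (by omega), hcx n i' (by omega)]
  apply substFixedPoint_eq_of_modEq hl hθ ha₀
  · rw [← Int.natCast_modEq_iff, Int.toNat_of_nonneg (by omega), Int.toNat_of_nonneg (by omega)]
    exact hii'.add_left _
  · convert hdet using 1
    have hL : (c n + i) % (l ^ K : ℕ) = (t.val + i) % (l ^ K : ℕ) :=
      (hcT.of_dvd (Int.natCast_dvd_natCast.mpr (dvd_mul_left _ _))).add_right i
    have hν : (c n : ℤ) + i = ((c n + i).toNat : ℕ) := (Int.toNat_of_nonneg (by omega)).symm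
    conv_rhs => rw [← hL, hν, ← Int.natCast_mod, Int.toNat_natCast]

theorem isClosed_subshift [TopologicalSpace A] [DiscreteTopology A] :
    IsClosed (subshift θ l) := by
  have : subshift θ l = ⋂ (i : ℤ) (n : ℕ), (fun (x : ℤ → A) (m : Fin n) => x (i + m)) ⁻¹'
      {w | ∃ k, 1 ≤ k ∧ ∃ a : A, ∃ j : ℕ, j + n ≤ l ^ k ∧
        ∀ m : Fin n, w m = substIter θ l k a (j + m)} := by
    ext x
    simp [subshift, Fin.forall_iff]
  rw [this]
  exact isClosed_iInter fun i => isClosed_iInter fun n =>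
    (isClosed_discrete _).preimage (by fun_prop)

theorem isCompact_subshift [Finite A] [TopologicalSpace A] [DiscreteTopology A] :
    IsCompact (subshift θ l) :=
  isClosed_subshift.isCompact

theorem iterate_shift_apply (x : ℤ → A) (n : ℕ) (i : ℤ) : shift^[n] x i = x (i + n) := by
  induction n generalizing x with
  | zero => simp
  | succ n ih =>
    rw [Function.iterate_succ_apply, ih, shift]
    push_cast
    ring_nf

theorem mapsTo_shift_subshift : Set.MapsTo shift (subshift θ l) (subshift θ l) := by
  intro x hx i n
  obtain ⟨k, hk, a, j, hj, hblock⟩ := hx (i + 1) n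
  exact ⟨k, hk, a, j, hj, fun m hm => by rw [shift, ← hblock m hm]; ring_nf⟩

end Subshift

section Topology

variable {A : Type*} [TopologicalSpace A]

theorem setOf_eqOn_Icc_mem_nhds [DiscreteTopology A] (p : ℤ → A) (R : ℕ) :
    {q | Set.EqOn q p (Set.Icc (-(R : ℤ)) R)} ∈ 𝓝 p :=
  set_pi_mem_nhds (s := fun i => {p i}) (Set.finite_Icc _ _) fun _ _ =>
    (isOpen_discrete _).mem_nhds rfl

theorem exists_setOf_eqOn_Icc_subset {p : ℤ → A} {U : Set (ℤ → A)} (hU : U ∈ 𝓝 p) :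
    ∃ R : ℕ, {q | Set.EqOn q p (Set.Icc (-(R : ℤ)) R)} ⊆ U := by
  rw [nhds_pi, Filter.mem_pi] at hU
  obtain ⟨I, hI, t, ht, hIt⟩ := hU
  obtain ⟨R, hR⟩ := (hI.image Int.natAbs).bddAbove
  refine ⟨R, fun q hq => hIt fun i hi => ?_⟩
  have hiR : i ∈ Set.Icc (-(R : ℤ)) R := by
    have := hR ⟨i, hi, rfl⟩
    simp only [Set.mem_Icc]
    omega
  rw [hq hiR]
  exact mem_of_mem_nhds (ht i)

theorem IsCompact.exists_forall_eqOn_Icc_norm_sub_le [DiscreteTopology A] {X : Set (ℤ → A)}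
    (hX : IsCompact X) {f : (ℤ → A) → ℂ} (hf : ContinuousOn f X) {ε : ℝ} (hε : 0 < ε) :
    ∃ R : ℕ, ∀ p ∈ X, ∀ q ∈ X, Set.EqOn q p (Set.Icc (-(R : ℤ)) R) → ‖f q - f p‖ ≤ ε := by
  have hloc : ∀ p ∈ X, ∃ R : ℕ, ∀ q ∈ X, Set.EqOn q p (Set.Icc (-(R : ℤ)) R) →
      ‖f q - f p‖ < ε / 2 := by
    intro p hp
    obtain ⟨U, hU, hUX⟩ := mem_nhdsWithin_iff_exists_mem_nhds_inter.mp
      (hf p hp (Metric.ball_mem_nhds (f p) (half_pos hε)))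
    obtain ⟨R, hR⟩ := exists_setOf_eqOn_Icc_subset hU
    exact ⟨R, fun q hq hqp => mem_ball_iff_norm.mp (hUX ⟨hR hqp, hq⟩)⟩
  choose! R hR using hloc
  obtain ⟨t, htX, hcover⟩ := hX.elim_nhds_subcover _ fun p _ => setOf_eqOn_Icc_mem_nhds p (R p)
  refine ⟨t.sup R, fun p hp q hq hqp => ?_⟩
  obtain ⟨p₀, hp₀, hpp₀⟩ := Set.mem_iUnion₂.mp (hcover hp)
  have hmono : Set.Icc (-(R p₀ : ℤ)) (R p₀) ⊆ Set.Icc (-((t.sup R : ℕ) : ℤ)) (t.sup R : ℕ) := by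
    have : R p₀ ≤ t.sup R := Finset.le_sup hp₀
    exact Set.Icc_subset_Icc (by omega) (by omega)
  have h₁ := hR p₀ (htX p₀ hp₀) q hq ((hqp.mono hmono).trans hpp₀)
  have h₂ := hR p₀ (htX p₀ hp₀) p hp hpp₀
  calc ‖f q - f p‖ ≤ ‖f q - f p₀‖ + ‖f p₀ - f p‖ := norm_sub_le_norm_sub_add_norm_sub ..
    _ ≤ ε := by rw [norm_sub_rev (f p₀)]; linarith

end Topology

section Averages

variable {u : ℕ → ℂ}

theorem norm_sum_le_of_subset_singleton {C : ℝ} (hC : ∀ n, ‖u n‖ ≤ C) {S : Finset ℕ} {x : ℕ}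
    (hS : S ⊆ {x}) : ‖∑ n ∈ S, u n‖ ≤ C := by
  rcases Finset.subset_singleton_iff.mp hS with rfl | rfl
  · simpa using (norm_nonneg _).trans (hC 0)
  · simpa using hC x

theorem norm_sum_filter_mod_eq_sub_sum_le {C : ℝ} (hC : ∀ n, ‖u n‖ ≤ C) {P b : ℕ} (hb : b < P)
    (N : ℕ) : ‖∑ n ∈ Finset.Icc 1 N with n % P = b, u n
      - ∑ q ∈ Finset.Icc 1 (N / P), u (P * q + b)‖ ≤ 2 * C := by
  classical
  -- the residue class differs from `{P q + b | 1 ≤ q ≤ N / P}` in at most one point each way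
  rw [← Finset.sum_image (g := fun q => P * q + b)
      (by intro _ _ _ _ h; simpa [show P ≠ 0 by omega] using h),
    ← Finset.sum_sdiff_sub_sum_sdiff, two_mul]
  refine (norm_sub_le _ _).trans (add_le_add (norm_sum_le_of_subset_singleton hC (x := b) ?_)
    (norm_sum_le_of_subset_singleton hC (x := P * (N / P) + b) ?_))
  · intro n hn
    simp only [Finset.mem_sdiff, Finset.mem_filter, Finset.mem_Icc, Finset.mem_image,
      not_exists, not_and] at hn
    obtain ⟨⟨⟨-, hnN⟩, hnb⟩, hnq⟩ := hn
    have hn : P * (n / P) + b = n := by rw [← hnb, Nat.div_add_mod]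
    have hq : n / P = 0 := by
      by_contra hq
      exact hnq _ ⟨Nat.pos_of_ne_zero hq, Nat.div_le_div_right hnN⟩ hn
    rw [Finset.mem_singleton, ← hn, hq, mul_zero, zero_add]
  · intro n hn
    simp only [Finset.mem_sdiff, Finset.mem_filter, Finset.mem_Icc, Finset.mem_image] at hn
    obtain ⟨⟨q, ⟨hq1, hqN⟩, rfl⟩, hn⟩ := hn
    have hmod : (P * q + b) % P = b := by simp [Nat.mod_eq_of_lt hb]
    have hNP : P * (N / P) ≤ N := Nat.mul_div_le N P
    have hq : q = N / P := by
      by_contra hq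
      have : P * (q + 1) ≤ P * (N / P) := Nat.mul_le_mul_left _ (by omega)
      have : P * 1 ≤ P * q := Nat.mul_le_mul_left _ hq1
      exact hn ⟨⟨by omega, by linarith⟩, hmod⟩
    simp [hq]

theorem tendsto_avg_filter_mod_eq {C : ℝ} (hC : ∀ n, ‖u n‖ ≤ C) (hua : AperiodicSeq u)
    {P b : ℕ} (hb : b < P) :
    Tendsto (fun N : ℕ => (N : ℂ)⁻¹ * ∑ n ∈ Finset.Icc 1 N with n % P = b, u n)
      atTop (𝓝 0) := by
  have hP : 0 < P := by omega
  have hmain : Tendsto (fun N : ℕ => (N : ℂ)⁻¹ * ∑ q ∈ Finset.Icc 1 (N / P), u (P * q + b))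
      atTop (𝓝 0) := by
    have h := ((hua P b hP).comp (Nat.tendsto_div_const_atTop hP.ne')).norm
    rw [norm_zero] at h
    refine squeeze_zero_norm (fun N => ?_) h
    rcases Nat.eq_zero_or_pos (N / P) with h | h
    · simp [h]
    · simp only [Function.comp, norm_mul, norm_inv, Complex.norm_natCast]
      gcongr
      exact Nat.div_le_self N P
  have herr : Tendsto (fun N : ℕ => (N : ℂ)⁻¹ * (∑ n ∈ Finset.Icc 1 N with n % P = b, u n
      - ∑ q ∈ Finset.Icc 1 (N / P), u (P * q + b))) atTop (𝓝 0) := by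
    refine squeeze_zero_norm (fun N => ?_)
      (tendsto_const_nhds.div_atTop tendsto_natCast_atTop_atTop :
        Tendsto (fun N : ℕ => 2 * C / N) _ _)
    rw [norm_mul, norm_inv, Complex.norm_natCast, inv_mul_eq_div]
    gcongr
    exact norm_sum_filter_mod_eq_sub_sum_le hC hb N
  simpa [mul_sub] using herr.add hmain

theorem tendsto_avg_mul_of_periodic {G : ℕ → ℂ} {P : ℕ} (hP : 0 < P)
    (hG : Function.Periodic G P) (hub : BoundedSeq u) (hua : AperiodicSeq u) :
    Tendsto (fun N : ℕ => (N : ℂ)⁻¹ * ∑ n ∈ Finset.Icc 1 N, G n * u n) atTop (𝓝 0) := by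
  obtain ⟨C, hC⟩ := hub
  have hsplit : ∀ N : ℕ, (N : ℂ)⁻¹ * ∑ n ∈ Finset.Icc 1 N, G n * u n
      = ∑ b ∈ Finset.range P, G b * ((N : ℂ)⁻¹ * ∑ n ∈ Finset.Icc 1 N with n % P = b, u n) := by
    intro N
    rw [← Finset.sum_fiberwise_of_maps_to (g := (· % P)) (t := Finset.range P)
      fun n _ => Finset.mem_range.mpr (Nat.mod_lt n hP), Finset.mul_sum]
    refine Finset.sum_congr rfl fun b _ => ?_
    rw [Finset.mul_sum, Finset.mul_sum, Finset.mul_sum]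
    refine Finset.sum_congr rfl fun n hn => ?_
    rw [← hG.map_mod_nat n, (Finset.mem_filter.mp hn).2]
    ring
  simp_rw [hsplit]
  simpa using tendsto_finsetSum _ fun b hb =>
    (tendsto_avg_filter_mod_eq hC hua (Finset.mem_range.mp hb)).const_mul (G b)

/-- Besicovitch rational almost periodicity. -/
def BesicovitchRAP (a : ℕ → ℂ) : Prop :=
  ∀ ε > 0, ∃ G : ℕ → ℂ, ∃ P > 0, Function.Periodic G P ∧
    ∃ β : ℝ, ∀ N : ℕ, ∑ n ∈ Finset.Icc 1 N, ‖a n - G n‖ ≤ ε * N + β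

theorem BesicovitchRAP.tendsto_avg_mul {a : ℕ → ℂ} (ha : BesicovitchRAP a) (hub : BoundedSeq u)
    (hua : AperiodicSeq u) :
    Tendsto (fun N : ℕ => (N : ℂ)⁻¹ * ∑ n ∈ Finset.Icc 1 N, a n * u n) atTop (𝓝 0) := by
  obtain ⟨C, hC⟩ := id hub
  have hC0 : 0 ≤ C := (norm_nonneg _).trans (hC 0)
  rw [NormedAddGroup.tendsto_nhds_zero]
  intro ε hε
  obtain ⟨G, P, hP, hG, β, hβ⟩ := ha (ε / (2 * (C + 1))) (by positivity)
  have hGu := NormedAddGroup.tendsto_nhds_zero.mp (tendsto_avg_mul_of_periodic hP hG hub hua)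
    (ε / 4) (by positivity)
  have hβ' : Tendsto (fun N : ℕ => C * β / N) atTop (𝓝 0) :=
    tendsto_const_nhds.div_atTop tendsto_natCast_atTop_atTop
  filter_upwards [hGu, hβ'.eventually (gt_mem_nhds (by positivity : 0 < ε / 4)),
    eventually_gt_atTop 0] with N hGN hβN hN
  have hN' : (0 : ℝ) < N := by exact_mod_cast hN
  have hsum : ‖∑ n ∈ Finset.Icc 1 N, (a n - G n) * u n‖ ≤ C * (ε / (2 * (C + 1)) * N + β) :=
    calc ‖∑ n ∈ Finset.Icc 1 N, (a n - G n) * u n‖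
        ≤ ∑ n ∈ Finset.Icc 1 N, ‖a n - G n‖ * C :=
          (norm_sum_le _ _).trans (Finset.sum_le_sum fun n _ => by
            rw [norm_mul]; exact mul_le_mul_of_nonneg_left (hC n) (norm_nonneg _))
      _ ≤ C * (ε / (2 * (C + 1)) * N + β) := by
          rw [← Finset.sum_mul, mul_comm]; exact mul_le_mul_of_nonneg_left (hβ N) hC0
  have hCε : C * (ε / (2 * (C + 1))) ≤ ε / 2 := by
    rw [mul_div_assoc', div_le_div_iff₀ (by positivity) (by positivity)]
    nlinarith
  calc ‖(N : ℂ)⁻¹ * ∑ n ∈ Finset.Icc 1 N, a n * u n‖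
      = ‖(N : ℂ)⁻¹ * ∑ n ∈ Finset.Icc 1 N, (a n - G n) * u n
          + (N : ℂ)⁻¹ * ∑ n ∈ Finset.Icc 1 N, G n * u n‖ := by
        rw [← mul_add, ← Finset.sum_add_distrib]; simp only [sub_mul, sub_add_cancel]
    _ ≤ C * (ε / (2 * (C + 1)) * N + β) / N + ε / 4 := by
        refine (norm_add_le _ _).trans (add_le_add ?_ hGN.le)
        rw [norm_mul, norm_inv, Complex.norm_natCast, inv_mul_eq_div]
        gcongr
    _ = C * (ε / (2 * (C + 1))) + C * β / N + ε / 4 := by field_simp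
    _ < ε := by linarith

end Averages

section Approximation

open scoped Finset

theorem exists_periodic_sum_norm_sub_le {s : ℕ → ℂ} {M η : ℝ} (hM : ∀ n, ‖s n‖ ≤ M)
    (hη : 0 ≤ η) {good : ℕ → Prop} [DecidablePred good] {P : ℕ}
    (hs : ∀ n n', good n → good n' → n ≡ n' [MOD P] → ‖s n - s n'‖ ≤ η) :
    ∃ G : ℕ → ℂ, Function.Periodic G P ∧ ∀ N : ℕ,
      ∑ n ∈ Finset.Icc 1 N, ‖s n - G n‖ ≤ η * N + 2 * M * #{n ∈ Finset.Icc 1 N | ¬ good n} := by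
  -- `G` repeats the value of `s` at a good representative of each residue class, if any
  set rep : ℕ → ℕ := fun r => Classical.epsilon fun n => good n ∧ n % P = r
  refine ⟨fun n => s (rep (n % P)), fun n => by simp, fun N => ?_⟩
  have hle : ∀ n, ‖s n - s (rep (n % P))‖
      ≤ η + if good n then 0 else 2 * M := by
    intro n
    split_ifs with hn
    · have hrep := Classical.epsilon_spec (p := fun n' => good n' ∧ n' % P = n % P) ⟨n, hn, rfl⟩
      simpa using hs n _ hn hrep.1 hrep.2.symm
    · calc ‖s n - s (rep (n % P))‖ ≤ M + M := (norm_sub_le _ _).trans (add_le_add (hM _) (hM _))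
        _ ≤ η + 2 * M := by linarith
  calc ∑ n ∈ Finset.Icc 1 N, ‖s n - s (rep (n % P))‖
      ≤ ∑ n ∈ Finset.Icc 1 N, (η + if good n then 0 else 2 * M) :=
        Finset.sum_le_sum fun n _ => hle n
    _ = η * N + 2 * M * #{n ∈ Finset.Icc 1 N | ¬ good n} := by
      rw [Finset.sum_add_distrib, Finset.sum_ite, Finset.sum_const_zero, Finset.sum_const,
        Finset.sum_const, Nat.card_Icc]
      simp [mul_comm]

theorem card_filter_intModEq_le (L : ℕ) (v : ℤ) (N : ℕ) :
    #{n ∈ Finset.Icc 1 N | ((n : ℕ) : ℤ) ≡ v [ZMOD L]} ≤ N / L + 1 := by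
  rw [← Finset.card_range (N / L + 1)]
  refine Finset.card_le_card_of_injOn (· / L) (fun n hn => ?_) fun n hn n' hn' h => ?_
  · simp only [Finset.coe_filter, Finset.mem_Icc] at hn
    simpa [Nat.lt_succ_iff] using Nat.div_le_div_right hn.1.2
  · simp only [Finset.coe_filter, Finset.mem_Icc] at hn hn'
    have hmod : n % L = n' % L := Int.natCast_modEq_iff.mp (hn.2.trans hn'.2.symm)
    rw [← Nat.div_add_mod n L, ← Nat.div_add_mod n' L, show n / L = n' / L from h, hmod]

theorem card_filter_exists_emod_mem_le (S : Finset ℕ) (I : Finset ℤ) (T : ℤ) {L : ℕ}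
    (hL : 0 < L) (N : ℕ) :
    #{n ∈ Finset.Icc 1 N | ∃ i ∈ I, ((T + (i + (n : ℕ))) % L).toNat ∈ S}
      ≤ #I * #S * (N / L + 1) := by
  classical
  calc #{n ∈ Finset.Icc 1 N | ∃ i ∈ I, ((T + (i + (n : ℕ))) % L).toNat ∈ S}
      ≤ #((I ×ˢ S).biUnion fun p =>
          {n ∈ Finset.Icc 1 N | ((n : ℕ) : ℤ) ≡ p.2 - T - p.1 [ZMOD L]}) := by
        refine Finset.card_le_card fun n hn => ?_
        simp only [Finset.mem_filter] at hn
        obtain ⟨hnN, i, hi, hiS⟩ := hn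
        refine Finset.mem_biUnion.mpr ⟨(i, ((T + (i + n)) % L).toNat),
          Finset.mem_product.mpr ⟨hi, hiS⟩, Finset.mem_filter.mpr ⟨hnN, ?_⟩⟩
        have h : T + (i + n) ≡ ((T + (i + n)) % L).toNat [ZMOD L] := by
          rw [Int.ModEq, Int.toNat_of_nonneg (Int.emod_nonneg _ (by omega)), Int.emod_emod]
        have := h.sub_right (T + i)
        rwa [show T + (i + n) - (T + i) = n by ring, ← sub_sub] at this
    _ ≤ ∑ p ∈ I ×ˢ S, #{n ∈ Finset.Icc 1 N | ((n : ℕ) : ℤ) ≡ p.2 - T - p.1 [ZMOD L]} :=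
        Finset.card_biUnion_le
    _ ≤ #I * #S * (N / L + 1) := by
        rw [← Finset.card_product, ← smul_eq_mul, ← Finset.sum_const]
        exact Finset.sum_le_sum fun p _ => card_filter_intModEq_le L _ N

open Classical in
theorem besicovitchRAP_of_forall_exists_good {s : ℕ → ℂ} {M : ℝ} (hM : ∀ n, ‖s n‖ ≤ M)
    (h : ∀ η > 0, ∃ P > 0, ∃ good : ℕ → Prop,
      (∀ n n', good n → good n' → n ≡ n' [MOD P] → ‖s n - s n'‖ ≤ η) ∧
      ∃ β : ℝ, ∀ N : ℕ, (#{n ∈ Finset.Icc 1 N | ¬ good n} : ℝ) ≤ η * N + β) :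
    BesicovitchRAP s := by
  intro ε hε
  have hM0 : 0 ≤ M := (norm_nonneg _).trans (hM 0)
  obtain ⟨P, hP, good, hgood, β, hβ⟩ := h (ε / (2 * M + 1)) (by positivity)
  obtain ⟨G, hG, hsum⟩ := exists_periodic_sum_norm_sub_le hM (by positivity) hgood
  refine ⟨G, P, hP, hG, 2 * M * β, fun N => (hsum N).trans ?_⟩
  calc ε / (2 * M + 1) * N + 2 * M * #{n ∈ Finset.Icc 1 N | ¬ good n}
      ≤ ε / (2 * M + 1) * N + 2 * M * (ε / (2 * M + 1) * N + β) := by gcongr; exact hβ N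
    _ = ε * N + 2 * M * β := by field_simp; ring

end Approximation

theorem besicovitchRAP_apply_iterate_shift {A : Type*} [Finite A] [TopologicalSpace A]
    [DiscreteTopology A] {θ : A → ℕ → A} {l : ℕ} {a₀ : A} (hl : 1 < l)
    (hθ : SubstPrimitive θ l) (ha₀ : θ a₀ 0 = a₀) (hch : columnNumber θ l = substHeight θ l a₀)
    {f : (ℤ → A) → ℂ} (hf : ContinuousOn f (subshift θ l)) {x : ℤ → A}
    (hx : x ∈ subshift θ l) : BesicovitchRAP fun n => f (shift^[n] x) := by
  classical
  have hxn : ∀ n, shift^[n] x ∈ subshift θ l := fun n => mapsTo_shift_subshift.iterate n hx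
  obtain ⟨M, hM⟩ := isCompact_subshift.exists_bound_of_continuousOn hf
  refine besicovitchRAP_of_forall_exists_good (fun n => hM _ (hxn n)) fun η hη => ?_
  obtain ⟨R, hR⟩ := isCompact_subshift.exists_forall_eqOn_Icc_norm_sub_le hf hη
  set W := Finset.Icc (-(R : ℤ)) R
  have hW : (0 : ℝ) < W.card := by simp [W]; omega
  obtain ⟨K, hK⟩ := exists_card_undeterminedColumns_heightResidue_le hl hθ ha₀ hch
    (div_pos hη hW)
  obtain ⟨T, hT⟩ := exists_eq_of_modEq_of_columnDeterminedBy hl hθ ha₀ hx K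
  set L := l ^ K
  have hL : 0 < L := by positivity
  set B := undeterminedColumns θ l (heightResidue θ l a₀) K
  -- `n` is good when the columns read by the window of `S^n x` are all determined
  set good : ℕ → Prop := fun n => ∀ i ∈ W,
    ColumnDeterminedBy θ l (heightResidue θ l a₀) K ((T + (i + n)) % (L : ℕ)).toNat
  refine ⟨substHeight θ l a₀ * L, Nat.mul_pos (substHeight_mem hl hθ ha₀).1 hL, good,
    fun n n' hn _ hnn' => hR _ (hxn n') _ (hxn n) fun i hi => ?_, W.card * B.card, fun N => ?_⟩
  · rw [iterate_shift_apply, iterate_shift_apply]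
    exact hT _ _ ((Int.natCast_modEq_iff.mpr hnn').add_left i) (hn i (by simpa [W] using hi))
  have hbad : (Finset.Icc 1 N).filter (¬ good ·) ⊆
      (Finset.Icc 1 N).filter fun n => ∃ i ∈ W, ((T + (i + n)) % (L : ℕ)).toNat ∈ B := by
    intro n
    simp only [Finset.mem_filter, good, not_forall]
    rintro ⟨hn, i, hi, hdet⟩
    have := Int.emod_lt_of_pos (T + (i + n)) (by positivity : (0 : ℤ) < L)
    exact ⟨hn, i, hi, Finset.mem_filter.mpr ⟨Finset.mem_range.mpr (by omega), hdet⟩⟩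
  have hBN : (B.card : ℝ) * (N / L : ℕ) ≤ η / W.card * N :=
    calc (B.card : ℝ) * (N / L : ℕ) ≤ η / W.card * l ^ K * (N / L : ℕ) := by gcongr
      _ = η / W.card * ((N / L : ℕ) * L : ℕ) := by simp only [L]; push_cast; ring
      _ ≤ η / W.card * N := by gcongr; exact Nat.div_mul_le_self N L
  calc _ ≤ ((W.card * B.card * (N / L + 1) : ℕ) : ℝ) := Nat.cast_le.mpr <|
        (Finset.card_le_card (by convert hbad)).trans (card_filter_exists_emod_mem_le B W T hL N)
    _ = W.card * (B.card * (N / L : ℕ)) + W.card * B.card := by push_cast; ring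
    _ ≤ W.card * (η / W.card * N) + W.card * B.card := by gcongr
    _ = η * N + W.card * B.card := by field_simp

/-- If the column number of a primitive substitution equals its height,
then every automatic sequence `n ↦ f(S^n x)` in `(X_θ, S)` is orthogonal to every bounded,
aperiodic arithmetic function (no multiplicativity assumed). -/
theorem automatic_orthogonal_aperiodic_of_column_eq_height
    {A : Type*} [Finite A] [TopologicalSpace A] [DiscreteTopology A]
    (l : ℕ) (hl : 2 ≤ l) (θ : A → ℕ → A) (hθ : SubstPrimitive θ l)
    (a₀ : A) (ha₀ : θ a₀ 0 = a₀)
    (hch : columnNumber θ l = substHeight θ l a₀)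
    (f : (ℤ → A) → ℂ) (hf : ContinuousOn f (subshift θ l))
    (x : ℤ → A) (hx : x ∈ subshift θ l)
    (u : ℕ → ℂ) (hub : BoundedSeq u) (hua : AperiodicSeq u) :
    Tendsto (fun N : ℕ => (N : ℂ)⁻¹ * ∑ n ∈ Finset.Icc 1 N, f (shift^[n] x) * u n)
      atTop (nhds 0) :=
  (besicovitchRAP_apply_iterate_shift hl hθ ha₀ hch hf hx).tendsto_avg_mul hub hua
end

section
/- Let 𝔊 be a group and T ∈ 𝔊 an element of infinite order. Let C be the centralizer of T in 𝔊; the cyclic subgroup ⟨T⟩ is central in C, hence normal, and assume the quotient group C/⟨T⟩ is finite. Let p and q be distinct primes such that the centralizer of T^p in 𝔊 equals C and q does not divide the order of any element of C/⟨T⟩. Then there is no W ∈ 𝔊 with W^q = T^p; in particular, T^p and T^q are not conjugate in 𝔊. -/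
/-- Let `T` be a group element of infinite order whose essential
centralizer `C(T)/⟨T⟩` is finite. If `p ≠ q` are primes such that the centralizer of
`T^p` equals that of `T` and `q` divides the order of no element of `C(T)/⟨T⟩`, then
`T^p` has no `q`-th root; in particular `T^p` and `T^q` are not conjugate. -/
theorem no_qth_root_of_finite_essential_centralizer
    {G : Type*} [Group G] (T : G)
    (hT : ∀ n : ℤ, T ^ n = 1 → n = 0)
    [hnorm : ((Subgroup.zpowers T).subgroupOf (Subgroup.centralizer {T})).Normal]
    (hfin : Finite ((Subgroup.centralizer ({T} : Set G)) ⧸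
        (Subgroup.zpowers T).subgroupOf (Subgroup.centralizer {T})))
    (p q : ℕ) (hp : p.Prime) (hq : q.Prime) (hpq : p ≠ q)
    (hcent : Subgroup.centralizer ({T ^ p} : Set G) = Subgroup.centralizer ({T} : Set G))
    (hqord : ∀ x : (Subgroup.centralizer ({T} : Set G)) ⧸
        (Subgroup.zpowers T).subgroupOf (Subgroup.centralizer {T}), ¬ (q ∣ orderOf x)) :
    (¬ ∃ W : G, W ^ q = T ^ p) ∧ ¬ IsConj (T ^ p) (T ^ q) := by
  have key : ¬ ∃ W : G, W ^ q = T ^ p := by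
    rintro ⟨W, hW⟩
    -- W commutes with T^p, hence W ∈ C(T^p) = C(T)
    have hWC : W ∈ Subgroup.centralizer ({T} : Set G) := by
      rw [← hcent]
      rw [Subgroup.mem_centralizer_iff]
      rintro h rfl
      rw [← hW, ← pow_succ, ← pow_succ']
    have hTC : T ∈ Subgroup.centralizer ({T} : Set G) := by
      rw [Subgroup.mem_centralizer_iff]
      rintro h rfl
      rfl
    set C := Subgroup.centralizer ({T} : Set G)
    set N := (Subgroup.zpowers T).subgroupOf C
    let W' : C := ⟨W, hWC⟩
    have hW' : (QuotientGroup.mk W' : C ⧸ N) ^ q = 1 := by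
      rw [← QuotientGroup.mk_pow, QuotientGroup.eq_one_iff]
      show W' ^ q ∈ N
      rw [Subgroup.mem_subgroupOf]
      show (W' : G) ^ q ∈ Subgroup.zpowers T
      show W ^ q ∈ Subgroup.zpowers T
      rw [hW]
      exact Subgroup.pow_mem _ (Subgroup.mem_zpowers T) p
    have hord : orderOf (QuotientGroup.mk W' : C ⧸ N) ∣ q := orderOf_dvd_of_pow_eq_one hW'
    have h1 : orderOf (QuotientGroup.mk W' : C ⧸ N) = 1 := by
      rcases (Nat.Prime.eq_one_or_self_of_dvd hq _ hord) with h | h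
      · exact h
      · exact (hqord _ (by rw [h])).elim
    have hWN : W' ∈ N := by
      rw [← QuotientGroup.eq_one_iff]
      exact orderOf_eq_one_iff.mp h1
    rw [Subgroup.mem_subgroupOf] at hWN
    obtain ⟨m, hm⟩ := hWN
    have hm' : T ^ m = W := hm
    -- W = T^m, so T^(m*q) = T^p
    have : T ^ (m * (q : ℤ)) = T ^ (p : ℤ) := by
      rw [zpow_mul, zpow_natCast, zpow_natCast, hm', hW]
    have hmp : m * (q : ℤ) = (p : ℤ) := by
      have := hT (m * q - p) (by rw [zpow_sub, this, mul_inv_cancel])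
      linarith
    have hqp : (q : ℤ) ∣ (p : ℤ) := ⟨m, by linarith [hmp]⟩
    have : q ∣ p := Int.ofNat_dvd.mp hqp
    exact hpq ((Nat.prime_dvd_prime_iff_eq hq hp).mp this).symm
  refine ⟨key, fun hconj => ?_⟩
  rw [isConj_iff] at hconj
  obtain ⟨c, hc⟩ := hconj
  have hc' : T ^ p = c⁻¹ * T ^ q * c := by rw [← hc]; group
  exact key ⟨c⁻¹ * T * c, by
    rw [hc']
    calc (c⁻¹ * T * c) ^ q = (c⁻¹ * T * (c⁻¹)⁻¹) ^ q := by rw [inv_inv]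
    _ = c⁻¹ * T ^ q * (c⁻¹)⁻¹ := conj_pow
    _ = c⁻¹ * T ^ q * c := by rw [inv_inv]⟩
end

section
/- Let θ : A → A^λ be a primitive substitution of constant length λ ≥ 2. Then the union of all members of 𝒳(θ) equals A, i.e. every letter a ∈ A belongs to some M ∈ 𝒳(θ). -/
open Filter Topology

lemma substIter_comp {A : Type*} (θ : A → ℕ → A) (l : ℕ) (hl : 1 ≤ l) :
    ∀ (k2 k1 : ℕ) (a : A) (j1 j2 : ℕ), j2 < l ^ k2 →
    substIter θ l (k1 + k2) a (j1 * l ^ k2 + j2) =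
      substIter θ l k2 (substIter θ l k1 a j1) j2 := by
  intro k2
  induction k2 with
  | zero =>
    intro k1 a j1 j2 h
    simp only [pow_zero, Nat.lt_one_iff] at h
    subst h
    simp [substIter]
  | succ k ih =>
    intro k1 a j1 j2 h
    have hl0 : 0 < l := hl
    have harr : j1 * l ^ (k + 1) + j2 = j2 + j1 * l ^ k * l := by ring
    have hdiv : (j1 * l ^ (k + 1) + j2) / l = j1 * l ^ k + j2 / l := by
      rw [harr, Nat.add_mul_div_right _ _ hl0, Nat.add_comm]
    have hmod : (j1 * l ^ (k + 1) + j2) % l = j2 % l := by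
      rw [harr, Nat.add_mul_mod_self_right]
    have hlt : j2 / l < l ^ k := by
      rw [Nat.div_lt_iff_lt_mul hl0]
      calc j2 < l ^ (k + 1) := h
        _ = l ^ k * l := by ring
    show substIter θ l (k1 + k + 1) a _ = _
    simp only [substIter, hdiv, hmod, ih k1 a j1 (j2 / l) hlt]

/-- For a primitive substitution `θ` of constant length, every letter
of the alphabet belongs to some member of `𝒳(θ)`. -/
theorem columnSets_cover
    {A : Type*} [Finite A] (l : ℕ) (hl : 2 ≤ l)
    (θ : A → ℕ → A) (hθ : SubstPrimitive θ l) :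
    ∀ a : A, ∃ M ∈ columnSets θ l, a ∈ M := by
  intro a
  have hl1 : 1 ≤ l := le_trans (by norm_num) hl
  set S : Set ℕ := { n : ℕ | ∃ k, 1 ≤ k ∧ ∃ j, j < l ^ k ∧
    ((fun b => substIter θ l k b j) '' Set.univ).ncard = n } with hS
  have hSne : S.Nonempty := by
    refine ⟨((fun b => substIter θ l 1 b 0) '' Set.univ).ncard, 1, le_refl 1, 0, ?_, rfl⟩
    simpa using Nat.lt_of_lt_of_le (by norm_num) hl
  have hcS : columnNumber θ l ∈ S := by
    have := Nat.sInf_mem hSne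
    simpa [columnNumber, columnNumberOn, hS] using this
  obtain ⟨k, hk, j, hj, hM⟩ := hcS
  set M : Set A := (fun b => substIter θ l k b j) '' Set.univ with hMdef
  obtain ⟨kp, hkp, hprim⟩ := hθ
  obtain ⟨j', hj', hj'a⟩ := hprim (substIter θ l k a j) a
  set J : ℕ := j * l ^ kp + j' with hJdef
  have hJlt : J < l ^ (k + kp) := by
    calc J < j * l ^ kp + l ^ kp := Nat.add_lt_add_left hj' _
      _ = (j + 1) * l ^ kp := by ring
      _ ≤ l ^ k * l ^ kp := Nat.mul_le_mul_right _ hj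
      _ = l ^ (k + kp) := (pow_add l k kp).symm
  set M' : Set A := (fun b => substIter θ l (k + kp) b J) '' Set.univ with hM'def
  have hcomp : M' = (fun b => substIter θ l kp b j') '' M := by
    rw [hMdef, Set.image_image, hM'def]
    exact Set.image_congr' (fun b => substIter_comp θ l hl1 kp k b j j' hj')
  have haM' : a ∈ M' := by
    refine ⟨a, Set.mem_univ a, ?_⟩
    show substIter θ l (k + kp) a (j * l ^ kp + j') = a
    rw [substIter_comp θ l hl1 kp k a j j' hj', hj'a]
  have hM'S : M'.ncard ∈ S := ⟨k + kp, le_trans hk (Nat.le_add_right _ _), J, hJlt, rfl⟩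
  have hle : M'.ncard ≤ columnNumber θ l := by
    rw [← hM, hcomp]
    exact Set.ncard_image_le M.toFinite
  have hge : columnNumber θ l ≤ M'.ncard := by
    have : columnNumber θ l = sInf S := rfl
    rw [this]
    exact Nat.sInf_le hM'S
  exact ⟨M', ⟨⟨k + kp, le_trans hk (Nat.le_add_right _ _), J, hJlt, rfl⟩,
    le_antisymm hle hge⟩, haM'⟩
end
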